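/- arXiv:math/0512101 — 4 statements merged into one kernel-verified Lean document; each statement's English description precedes it below -/
import Mathlib

section
/- Let a, b ∈ ℂ with |b| < |a| and a ≠ 0, and let g(z) = a|z|² + b z̄². Then for every function R defined near 0 with R(z) = o(|z|²) as z → 0, the polynomial p(ζ₁, ζ₂) = −i a ζ₁ + i ā ζ₂ satisfies Im p(z, z̄ + g(z) + R(z)) > 0 and Im p(z, z̄ − g(z) + R(z)) < 0 for all z ≠ 0 sufficiently close to 0. -/
open Complex Filter Asymptotics Topology

lemma key_im (a z w : ℂ) :
    (-Complex.I * a * z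
      + Complex.I * (starRingEnd ℂ) a * ((starRingEnd ℂ) z + w)).im
      = ((starRingEnd ℂ) a * w).re := by
  simp [Complex.add_im, Complex.mul_im, Complex.mul_re, Complex.I_re, Complex.I_im]
  ring

/-- For `g(z) = a|z|² + b z̄²` with `|b| < |a|`, `a ≠ 0`, and any `R` with
`R(z) = o(|z|²)`, the polynomial `p(ζ₁,ζ₂) = -i a ζ₁ + i ā ζ₂` satisfies
`Im p(z, z̄ + g(z) + R(z)) > 0` and `Im p(z, z̄ - g(z) + R(z)) < 0`
for all `z ≠ 0` sufficiently close to `0`. -/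
theorem stmt1 (a b : ℂ) (hab : ‖b‖ < ‖a‖) (ha : a ≠ 0)
    (g : ℂ → ℂ)
    (hg : ∀ z, g z = a * ((‖z‖ ^ 2 : ℝ) : ℂ) + b * ((starRingEnd ℂ) z) ^ 2)
    (R : ℂ → ℂ)
    (hRo : R =o[𝓝[≠] (0 : ℂ)] fun z => ((‖z‖ ^ 2 : ℝ) : ℂ)) :
    ∀ᶠ z in 𝓝[≠] (0 : ℂ),
      0 < (-Complex.I * a * z
            + Complex.I * (starRingEnd ℂ) a * ((starRingEnd ℂ) z + g z + R z)).im ∧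
      (-Complex.I * a * z
            + Complex.I * (starRingEnd ℂ) a * ((starRingEnd ℂ) z - g z + R z)).im < 0 := by
  have hc0 : (0:ℝ) < (‖a‖ - ‖b‖)/2 := by linarith
  have ha0 : (0:ℝ) < ‖a‖ := norm_pos_iff.mpr ha
  filter_upwards [hRo.def hc0, self_mem_nhdsWithin] with z hz hz0
  have hzpos : (0:ℝ) < ‖z‖ := by
    simp only [Set.mem_compl_iff, Set.mem_singleton_iff] at hz0
    exact norm_pos_iff.mpr hz0
  have hRb : ‖R z‖ ≤ (‖a‖ - ‖b‖)/2 * ‖z‖ ^ 2 := by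
    simpa [_root_.abs_of_nonneg (by positivity : (0:ℝ) ≤ ‖z‖ ^ 2)]
      using hz
  -- real part of conj a * g z
  have hgre : ((starRingEnd ℂ) a * g z).re
      = ‖a‖ ^ 2 * ‖z‖ ^ 2
        + ((starRingEnd ℂ) a * b * ((starRingEnd ℂ) z) ^ 2).re := by
    rw [hg, mul_add, Complex.add_re]
    congr 1
    · have h1 : (starRingEnd ℂ) a * (a * ((‖z‖ ^ 2 : ℝ) : ℂ))
        = (((‖a‖ ^ 2 * ‖z‖ ^ 2 : ℝ)) : ℂ) := by
        rw [← mul_assoc, mul_comm ((starRingEnd ℂ) a) a, Complex.mul_conj,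
          ← Complex.ofReal_mul, Complex.normSq_eq_norm_sq]
      rw [h1, Complex.ofReal_re]
    · ring_nf
  have habs2 : ‖(starRingEnd ℂ) a * b * ((starRingEnd ℂ) z) ^ 2‖
      = ‖a‖ * ‖b‖ * ‖z‖ ^ 2 := by
    simp [map_mul, map_pow]
  have hb1 := Complex.abs_re_le_norm ((starRingEnd ℂ) a * b * ((starRingEnd ℂ) z) ^ 2)
  rw [habs2] at hb1
  rw [abs_le] at hb1
  have hR1 := Complex.abs_re_le_norm ((starRingEnd ℂ) a * R z)
  rw [norm_mul, Complex.norm_conj] at hR1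
  rw [abs_le] at hR1
  have hRmul : ‖a‖ * ‖R z‖
      ≤ ‖a‖ * ((‖a‖ - ‖b‖)/2 * ‖z‖ ^ 2) :=
    mul_le_mul_of_nonneg_left hRb ha0.le
  have hZ : (0:ℝ) < ‖z‖ ^ 2 := by positivity
  have hkey : ‖a‖ * ((‖a‖ - ‖b‖) * ‖z‖ ^ 2) > 0 := by
    have : (0:ℝ) < ‖a‖ - ‖b‖ := by linarith
    positivity
  constructor
  · rw [add_assoc ((starRingEnd ℂ) z), key_im, mul_add, Complex.add_re, hgre]
    nlinarith [hR1.1, hb1.1]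
  · rw [sub_eq_add_neg, add_assoc ((starRingEnd ℂ) z), key_im]
    have e : (starRingEnd ℂ) a * (-g z + R z)
        = -((starRingEnd ℂ) a * g z) + (starRingEnd ℂ) a * R z := by ring
    rw [e, Complex.add_re, Complex.neg_re, hgre]
    nlinarith [hR1.2, hb1.2]
end

section
/- The function g(z) = z³ z̄ satisfies: for every function R with R(z) = o(g(z)) as z → 0, the polynomial p(ζ₁, ζ₂) = −i ζ₁³ + i ζ₂³ satisfies Im p(z, z̄ + g(z) + R(z)) > 0 and Im p(z, z̄ − g(z) + R(z)) < 0 for all z ≠ 0 sufficiently close to 0. -/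
open Complex Filter Asymptotics Topology

lemma im_aux (z ε : ℂ) :
    (-Complex.I * z ^ 3 + Complex.I * ((starRingEnd ℂ) z + ε) ^ 3).im
      = (Complex.I * (3 * ((starRingEnd ℂ) z) ^ 2 * ε
          + 3 * (starRingEnd ℂ) z * ε ^ 2 + ε ^ 3)).im := by
  have h : -Complex.I * z ^ 3 + Complex.I * ((starRingEnd ℂ) z + ε) ^ 3
      = (-Complex.I * z ^ 3 + Complex.I * ((starRingEnd ℂ) z) ^ 3)
        + Complex.I * (3 * ((starRingEnd ℂ) z) ^ 2 * ε
          + 3 * (starRingEnd ℂ) z * ε ^ 2 + ε ^ 3) := by ring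
  rw [h, Complex.add_im]
  have h0 : (-Complex.I * z ^ 3 + Complex.I * ((starRingEnd ℂ) z) ^ 3).im = 0 := by
    have hc : (((starRingEnd ℂ) z) ^ 3).re = (z ^ 3).re := by
      rw [← map_pow, Complex.conj_re]
    simp only [Complex.add_im, Complex.mul_im, Complex.neg_re, Complex.neg_im,
      Complex.I_re, Complex.I_im, hc]
    ring
  rw [h0, zero_add]

lemma normB_lt (z Rz ε : ℂ) (hz : z ≠ 0) (hr : ‖z‖ < 1/3)
    (hR : ‖Rz‖ ≤ 1/2 * ‖z‖ ^ 4) (he : ‖ε‖ ≤ ‖z‖ ^ 4 + ‖Rz‖) :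
    ‖3 * ((starRingEnd ℂ) z) ^ 2 * Rz + 3 * (starRingEnd ℂ) z * ε ^ 2 + ε ^ 3‖
      < 3 * ‖z‖ ^ 6 := by
  set r := ‖z‖ with hrdef
  have hr0 : 0 < r := norm_pos_iff.mpr hz
  have hc : ‖(starRingEnd ℂ) z‖ = r := by simp [hrdef]
  have he' : ‖ε‖ ≤ 3/2 * r ^ 4 := by nlinarith
  have he0 : (0:ℝ) ≤ ‖ε‖ := norm_nonneg _
  have he2 : ‖ε‖ ^ 2 ≤ (3/2 * r ^ 4) ^ 2 := by nlinarith
  have he3 : ‖ε‖ ^ 3 ≤ (3/2 * r ^ 4) ^ 3 := by nlinarith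
  have h1 : ‖3 * ((starRingEnd ℂ) z) ^ 2 * Rz‖ ≤ 3 * r ^ 2 * (1/2 * r^4) := by
    rw [norm_mul, norm_mul, norm_pow, hc]
    have : ‖(3:ℂ)‖ = 3 := by norm_num
    rw [this]
    nlinarith [norm_nonneg Rz]
  have h2 : ‖3 * (starRingEnd ℂ) z * ε ^ 2‖ ≤ 3 * r * (3/2 * r^4)^2 := by
    rw [norm_mul, norm_mul, norm_pow, hc]
    have : ‖(3:ℂ)‖ = 3 := by norm_num
    rw [this]
    nlinarith
  have h3 : ‖ε ^ 3‖ ≤ (3/2 * r^4)^3 := by rw [norm_pow]; exact he3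
  have htot := (norm_add_le _ (ε^3)).trans (add_le_add
    ((norm_add_le _ _).trans (add_le_add h1 h2)) h3)
  have hr3 : r ^ 3 < 1/27 := by nlinarith
  nlinarith [pow_pos hr0 6, pow_pos hr0 4, mul_pos (pow_pos hr0 6) (sub_pos.mpr hr3),
    sq_nonneg (r^3), pow_pos hr0 3]

/-- The function `g(z) = z³ z̄` satisfies the polynomial condition with respect to
`p(ζ₁,ζ₂) = -i ζ₁³ + i ζ₂³`. -/
theorem stmt2 (g : ℂ → ℂ) (hg : ∀ z, g z = z ^ 3 * (starRingEnd ℂ) z)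
    (R : ℂ → ℂ) (hRo : R =o[𝓝[≠] (0 : ℂ)] g) :
    ∀ᶠ z in 𝓝[≠] (0 : ℂ),
      0 < (-Complex.I * z ^ 3 + Complex.I * ((starRingEnd ℂ) z + g z + R z) ^ 3).im ∧
      (-Complex.I * z ^ 3 + Complex.I * ((starRingEnd ℂ) z - g z + R z) ^ 3).im < 0 := by
  have hball : ∀ᶠ (z:ℂ) in 𝓝[≠] 0, ‖z‖ < 1/3 := by
    apply eventually_nhdsWithin_of_eventually_nhds
    have := Metric.ball_mem_nhds (0:ℂ) (show (0:ℝ) < 1/3 by norm_num)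
    filter_upwards [this] with z hz
    simpa [Metric.mem_ball, dist_zero_right] using hz
  filter_upwards [hRo.def (by norm_num : (0:ℝ) < 1/2), hball, self_mem_nhdsWithin]
    with z hR hr hz
  have hz : z ≠ 0 := hz
  have hr0 : 0 < ‖z‖ := norm_pos_iff.mpr hz
  have hgz : ‖g z‖ = ‖z‖ ^ 4 := by
    rw [hg, norm_mul, norm_pow]
    simp
    ring
  have hR' : ‖R z‖ ≤ 1/2 * ‖z‖ ^ 4 := by rw [← hgz]; exact hR
  have hmc : z * (starRingEnd ℂ) z = (Complex.normSq z : ℂ) := Complex.mul_conj z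
  have hnsq : Complex.normSq z = ‖z‖ ^ 2 := by
    rw [Complex.normSq_eq_norm_sq]
  have hq : (‖z‖ ^ 2) ^ 3 = ‖z‖ ^ 6 := by ring
  -- plus case
  constructor
  · have hsplit : (starRingEnd ℂ) z + g z + R z = (starRingEnd ℂ) z + (g z + R z) := by ring
    rw [hsplit, im_aux]
    have hdec : Complex.I * (3 * ((starRingEnd ℂ) z) ^ 2 * (g z + R z)
        + 3 * (starRingEnd ℂ) z * (g z + R z) ^ 2 + (g z + R z) ^ 3)
        = ((3 * Complex.normSq z ^ 3 : ℝ) : ℂ) * Complex.I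
          + Complex.I * (3 * ((starRingEnd ℂ) z) ^ 2 * R z
            + 3 * (starRingEnd ℂ) z * (g z + R z) ^ 2 + (g z + R z) ^ 3) := by
      rw [hg]
      push_cast
      rw [← hmc]
      ring
    rw [hdec, Complex.add_im]
    have him1 : (((3 * Complex.normSq z ^ 3 : ℝ) : ℂ) * Complex.I).im
        = 3 * Complex.normSq z ^ 3 := by
      simp [Complex.mul_im, ← Complex.ofReal_pow]
    have him2 : (Complex.I * (3 * ((starRingEnd ℂ) z) ^ 2 * R z
        + 3 * (starRingEnd ℂ) z * (g z + R z) ^ 2 + (g z + R z) ^ 3)).im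
        = (3 * ((starRingEnd ℂ) z) ^ 2 * R z
        + 3 * (starRingEnd ℂ) z * (g z + R z) ^ 2 + (g z + R z) ^ 3).re := by
      simp [Complex.mul_im]
    rw [him1, him2, hnsq]
    have hB := normB_lt z (R z) (g z + R z) hz hr hR'
      (by calc ‖g z + R z‖ ≤ ‖g z‖ + ‖R z‖ := norm_add_le _ _
            _ = ‖z‖ ^ 4 + ‖R z‖ := by rw [hgz])
    have := (neg_abs_le _).trans (le_abs_self (3 * ((starRingEnd ℂ) z) ^ 2 * R z
        + 3 * (starRingEnd ℂ) z * (g z + R z) ^ 2 + (g z + R z) ^ 3).re)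
    have habs := Complex.abs_re_le_norm (3 * ((starRingEnd ℂ) z) ^ 2 * R z
        + 3 * (starRingEnd ℂ) z * (g z + R z) ^ 2 + (g z + R z) ^ 3)
    have := abs_lt.mp (habs.trans_lt hB)
    linarith [this.1, this.2, hq, pow_pos hr0 6]
  · have hsplit : (starRingEnd ℂ) z - g z + R z = (starRingEnd ℂ) z + (R z - g z) := by ring
    rw [hsplit, im_aux]
    have hdec : Complex.I * (3 * ((starRingEnd ℂ) z) ^ 2 * (R z - g z)
        + 3 * (starRingEnd ℂ) z * (R z - g z) ^ 2 + (R z - g z) ^ 3)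
        = ((-(3 * Complex.normSq z ^ 3) : ℝ) : ℂ) * Complex.I
          + Complex.I * (3 * ((starRingEnd ℂ) z) ^ 2 * R z
            + 3 * (starRingEnd ℂ) z * (R z - g z) ^ 2 + (R z - g z) ^ 3) := by
      rw [hg]
      push_cast
      rw [← hmc]
      ring
    rw [hdec, Complex.add_im]
    have him1 : (((-(3 * Complex.normSq z ^ 3) : ℝ) : ℂ) * Complex.I).im
        = -(3 * Complex.normSq z ^ 3) := by
      simp [Complex.mul_im, ← Complex.ofReal_pow]
    have him2 : (Complex.I * (3 * ((starRingEnd ℂ) z) ^ 2 * R z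
        + 3 * (starRingEnd ℂ) z * (R z - g z) ^ 2 + (R z - g z) ^ 3)).im
        = (3 * ((starRingEnd ℂ) z) ^ 2 * R z
        + 3 * (starRingEnd ℂ) z * (R z - g z) ^ 2 + (R z - g z) ^ 3).re := by
      simp [Complex.mul_im]
    rw [him1, him2, hnsq]
    have hB := normB_lt z (R z) (R z - g z) hz hr hR'
      (by calc ‖R z - g z‖ ≤ ‖R z‖ + ‖g z‖ := norm_sub_le _ _
            _ = ‖z‖ ^ 4 + ‖R z‖ := by rw [hgz]; ring)
    have habs := Complex.abs_re_le_norm (3 * ((starRingEnd ℂ) z) ^ 2 * R z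
        + 3 * (starRingEnd ℂ) z * (R z - g z) ^ 2 + (R z - g z) ^ 3)
    have := abs_lt.mp (habs.trans_lt hB)
    linarith [this.1, this.2, hq, pow_pos hr0 6]
end

section
/- Let g be an even function defined near 0 in ℂ (g(−z) = g(z)) and p(ζ₁, ζ₂) a polynomial such that for all functions R with R(z) = o(g(z)), both Im p(z, z̄ + g(z) + R(z)) > 0 and Im p(z, z̄ − g(z) + R(z)) < 0 hold for all z ≠ 0 sufficiently close to 0. Then the odd part q of p (i.e., q(ζ) = (p(ζ) − p(−ζ))/2, the sum of the homogeneous components of p of odd degree) satisfies the same property: for all R with R(z) = o(g(z)), Im q(z, z̄ + g(z) + R(z)) > 0 and Im q(z, z̄ − g(z) + R(z)) < 0 for all z ≠ 0 sufficiently close to 0. -/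
open Complex Filter Asymptotics Topology

/-! Apply the hypothesis to `w ↦ -R (-w)`, which is again `o(g)` because `g` is even, and evaluate
at `w = -z`: the point `(w, w̄ ∓ g w - R (-w))` is exactly `-(z, z̄ ± g z + R z)`, so the sign
conditions for `p` at the reflected points give `Im p(-ζ) < 0 < Im p(ζ)` on the `+` branch and the
reverse on the `-` branch, and both survive in `Im (p(ζ) - p(-ζ)) / 2`. -/

theorem Filter.tendsto_neg_nhdsNE {G : Type*} [TopologicalSpace G] [InvolutiveNeg G]
    [ContinuousNeg G] (a : G) : Tendsto Neg.neg (𝓝[≠] a) (𝓝[≠] (-a)) := by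
  rw [← Filter.neg_nhdsNE]; exact tendsto_map

theorem Asymptotics.IsLittleO.neg_comp_neg {E F F' : Type*} [NormedAddCommGroup E]
    [Norm F] [SeminormedAddCommGroup F'] {R : E → F'} {g : E → F}
    (hR : R =o[𝓝[≠] 0] g) (hg : ∀ z, g (-z) = g z) :
    (fun w => -R (-w)) =o[𝓝[≠] 0] g := by
  have h := (hR.comp_tendsto (by simpa using tendsto_neg_nhdsNE (0 : E))).neg_left
  rwa [show g ∘ Neg.neg = g from funext hg] at h

/-- If an even function `g` satisfies the polynomial condition with respect to a
polynomial `p` (in two complex variables), then it also satisfies the polynomial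
condition with respect to the odd part `q(ζ) = (p(ζ) - p(-ζ))/2` of `p`. -/
theorem stmt3 (g : ℂ → ℂ) (hg_even : ∀ z, g (-z) = g z)
    (p : MvPolynomial (Fin 2) ℂ)
    (hp : ∀ R : ℂ → ℂ, R =o[𝓝[≠] (0 : ℂ)] g →
      ∀ᶠ z in 𝓝[≠] (0 : ℂ),
        0 < (MvPolynomial.eval ![z, (starRingEnd ℂ) z + g z + R z] p).im ∧
        (MvPolynomial.eval ![z, (starRingEnd ℂ) z - g z + R z] p).im < 0) :
    ∀ R : ℂ → ℂ, R =o[𝓝[≠] (0 : ℂ)] g →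
      ∀ᶠ z in 𝓝[≠] (0 : ℂ),
        0 < ((MvPolynomial.eval ![z, (starRingEnd ℂ) z + g z + R z] p
              - MvPolynomial.eval ![-z, -((starRingEnd ℂ) z + g z + R z)] p) / 2).im ∧
        ((MvPolynomial.eval ![z, (starRingEnd ℂ) z - g z + R z] p
              - MvPolynomial.eval ![-z, -((starRingEnd ℂ) z - g z + R z)] p) / 2).im < 0 := by
  intro R hR
  have hneg : Tendsto Neg.neg (𝓝[≠] (0 : ℂ)) (𝓝[≠] 0) := by
    simpa using tendsto_neg_nhdsNE (0 : ℂ)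
  filter_upwards [hp R hR, hneg.eventually (hp _ (hR.neg_comp_neg hg_even))]
    with z ⟨hplus, hminus⟩ ⟨hplus', hminus'⟩
  have reflect_plus : -(starRingEnd ℂ) z + g z + -R z = -((starRingEnd ℂ) z - g z + R z) := by
    ring
  have reflect_minus : -(starRingEnd ℂ) z - g z + -R z = -((starRingEnd ℂ) z + g z + R z) := by
    ring
  simp only [hg_even, map_neg, neg_neg, reflect_plus, reflect_minus] at hplus' hminus'
  simp only [div_ofNat_im, sub_im]
  constructor <;> linarith
end

section
/- Let g be even, C^1 near the origin in ℂ, homogeneous of degree m > 1 (g(tz) = t^m g(z) for t > 0), and suppose Im( ∂p_{2s−1}/∂ζ₂ (z, z̄) · g(z) ) > 0 for all z on the unit circle Γ, where p_{2s−1}(ζ₁,ζ₂) = Σ_{k=0}^{2s−1} a_k ζ₁^k ζ₂^{2s−1−k} is a homogeneous complex-symmetric polynomial of degree 2s−1 (i.e., a_k = \overline{a_{2s−1−k}}). Then for every function R with R(z) = o(g(z)) as z → 0, one has Im p_{2s−1}(z, z̄ + g(z) + R(z)) > 0 and Im p_{2s−1}(z, z̄ − g(z) + R(z)) < 0 for all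 z ≠ 0 sufficiently close to 0. -/
open Complex Filter Asymptotics Topology

open Finset

lemma taylor_rem_bound (d : ℕ) (x ε : ℂ) (hε : ‖ε‖ ≤ ‖x‖) :
    ‖(x + ε) ^ d - x ^ d - (d : ℂ) * x ^ (d - 1) * ε‖ ≤ 2 ^ d * ‖ε‖ ^ 2 * ‖x‖ ^ (d - 2) := by
  match d with
  | 0 => simp
  | 1 => have h : (x + ε) ^ 1 - x ^ 1 - ((1:ℕ):ℂ) * x ^ (1-1) * ε = 0 := by
           push_cast; ring
         rw [h, norm_zero]; positivity
  | (e + 2) =>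
    set n := e + 2 with hn
    have hexp : (x + ε) ^ n = ∑ k ∈ range (n + 1), ε ^ k * x ^ (n - k) * (n.choose k) := by
      rw [add_comm x ε, add_pow]
    have hsplit : ∑ k ∈ range (n + 1), (ε ^ k * x ^ (n - k) * (n.choose k) : ℂ)
        = (x ^ n + (n : ℂ) * x ^ (n - 1) * ε)
          + ∑ k ∈ Finset.Ico 2 (n + 1), ε ^ k * x ^ (n - k) * (n.choose k) := by
      rw [range_eq_Ico, ← Finset.sum_Ico_consecutive _ (by omega : 0 ≤ 2) (by omega : 2 ≤ n + 1)]
      congr 1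
      rw [show Finset.Ico 0 2 = Finset.range 2 from rfl]
      simp [Finset.sum_range_succ]
      ring
    have key : (x + ε) ^ n - x ^ n - (n : ℂ) * x ^ (n - 1) * ε
        = ∑ k ∈ Finset.Ico 2 (n + 1), ε ^ k * x ^ (n - k) * (n.choose k) := by
      rw [hexp, hsplit]; ring
    rw [key]
    calc ‖∑ k ∈ Finset.Ico 2 (n + 1), ε ^ k * x ^ (n - k) * (n.choose k : ℂ)‖
        ≤ ∑ k ∈ Finset.Ico 2 (n + 1), ‖ε ^ k * x ^ (n - k) * (n.choose k : ℂ)‖ :=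
          norm_sum_le _ _
      _ ≤ ∑ k ∈ Finset.Ico 2 (n + 1), (n.choose k : ℝ) * (‖ε‖ ^ 2 * ‖x‖ ^ (n - 2)) := by
          apply Finset.sum_le_sum
          intro k hk
          rw [Finset.mem_Ico] at hk
          rw [norm_mul, norm_mul, norm_pow, norm_pow]
          have h1 : ‖ε‖ ^ k ≤ ‖ε‖ ^ 2 * ‖x‖ ^ (k - 2) := by
            have : ‖ε‖ ^ k = ‖ε‖ ^ 2 * ‖ε‖ ^ (k - 2) := by
              rw [← pow_add]; congr 1; omega
            rw [this]
            have := pow_le_pow_left₀ (norm_nonneg ε) hε (k-2)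
            nlinarith [norm_nonneg ε, sq_nonneg ‖ε‖, pow_nonneg (norm_nonneg ε) 2]
          have h2 : ‖(n.choose k : ℂ)‖ = (n.choose k : ℝ) := by
            simp
          rw [h2]
          calc ‖ε‖ ^ k * ‖x‖ ^ (n - k) * (n.choose k : ℝ)
              ≤ (‖ε‖ ^ 2 * ‖x‖ ^ (k - 2)) * ‖x‖ ^ (n - k) * (n.choose k : ℝ) := by
                gcongr
            _ = (n.choose k : ℝ) * (‖ε‖ ^ 2 * ‖x‖ ^ (n - 2)) := by
                rw [mul_assoc (‖ε‖^2), ← pow_add]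
                rw [show k - 2 + (n - k) = n - 2 by omega]
                ring
      _ ≤ ∑ k ∈ Finset.range (n + 1), (n.choose k : ℝ) * (‖ε‖ ^ 2 * ‖x‖ ^ (n - 2)) := by
          apply Finset.sum_le_sum_of_subset_of_nonneg
          · rw [range_eq_Ico]; exact Finset.Ico_subset_Ico (by omega) le_rfl
          · intro k _ _; positivity
      _ = 2 ^ n * ‖ε‖ ^ 2 * ‖x‖ ^ (n - 2) := by
          rw [← Finset.sum_mul, mul_assoc]
          congr 1
          rw [← Nat.cast_sum]
          rw [Nat.sum_range_choose]
          push_cast; ring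


lemma expand_lemma (n : ℕ) (hn : 1 ≤ n) (a : ℕ → ℂ) (z ε : ℂ) :
    ∑ k ∈ range (n + 1), a k * z ^ k * ((starRingEnd ℂ) z + ε) ^ (n - k)
    = ∑ k ∈ range (n + 1), a k * z ^ k * ((starRingEnd ℂ) z) ^ (n - k)
    + (∑ k ∈ range n, ((n - k : ℕ) : ℂ) * a k * z ^ k * ((starRingEnd ℂ) z) ^ (n - 1 - k)) * ε
    + ∑ k ∈ range (n + 1), a k * z ^ k *
        (((starRingEnd ℂ) z + ε) ^ (n - k) - ((starRingEnd ℂ) z) ^ (n - k)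
          - ((n - k : ℕ) : ℂ) * ((starRingEnd ℂ) z) ^ (n - k - 1) * ε) := by
  have hmid : (∑ k ∈ range n, ((n - k : ℕ) : ℂ) * a k * z ^ k * ((starRingEnd ℂ) z) ^ (n - 1 - k))
      = ∑ k ∈ range (n + 1), ((n - k : ℕ) : ℂ) * a k * z ^ k * ((starRingEnd ℂ) z) ^ (n - 1 - k) := by
    rw [Finset.sum_range_succ]
    simp
  rw [hmid, Finset.sum_mul, ← Finset.sum_add_distrib, ← Finset.sum_add_distrib]
  apply Finset.sum_congr rfl
  intro k hk
  rw [show n - 1 - k = n - k - 1 from Nat.sub_right_comm n 1 k]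
  ring

lemma real_part_lemma (n : ℕ) (a : ℕ → ℂ) (hsym : ∀ k ≤ n, a k = (starRingEnd ℂ) (a (n - k)))
    (z : ℂ) : (∑ k ∈ range (n + 1), a k * z ^ k * ((starRingEnd ℂ) z) ^ (n - k)).im = 0 := by
  rw [← Complex.conj_eq_iff_im]
  have hre := Finset.sum_range_reflect
    (fun j => a j * z ^ j * ((starRingEnd ℂ) z) ^ (n - j)) (n + 1)
  simp only [Nat.add_sub_cancel] at hre
  calc (starRingEnd ℂ) (∑ k ∈ range (n + 1), a k * z ^ k * ((starRingEnd ℂ) z) ^ (n - k))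
      = ∑ k ∈ range (n + 1), a (n - k) * z ^ (n - k) * ((starRingEnd ℂ) z) ^ (n - (n - k)) := by
        rw [map_sum]
        apply Finset.sum_congr rfl
        intro k hk
        rw [Finset.mem_range] at hk
        rw [map_mul, map_mul, map_pow, map_pow, Complex.conj_conj]
        have h1 : (starRingEnd ℂ) (a k) = a (n - k) := by
          rw [hsym k (by omega), Complex.conj_conj]
        rw [h1, show n - (n - k) = k by omega]
        ring
    _ = _ := hre

set_option maxHeartbeats 1000000


/-- Theorem 3.1: if `g` is even, `C¹` near `0`, homogeneous of degree `m > 1`, and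
`Im(∂p_{2s-1}/∂ζ₂(z,z̄)·g(z)) > 0` on the unit circle for a homogeneous
complex-symmetric polynomial `p_{2s-1}` of degree `2s-1`, then `g` satisfies the
polynomial condition with respect to `p_{2s-1}`. -/
theorem stmt8 (g : ℂ → ℂ) (hg_even : ∀ z, g (-z) = g z)
    (hgC1 : ∃ U : Set ℂ, IsOpen U ∧ (0 : ℂ) ∈ U ∧ ContDiffOn ℝ 1 g U)
    (m : ℝ) (hm : 1 < m)
    (hg_hom : ∀ t : ℝ, 0 < t → ∀ z : ℂ, g ((t : ℂ) * z) = ((t ^ m : ℝ) : ℂ) * g z)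
    (s : ℕ) (hs : 1 ≤ s) (a : ℕ → ℂ)
    (h_sym : ∀ k ≤ 2 * s - 1, a k = (starRingEnd ℂ) (a (2 * s - 1 - k)))
    (h_pos : ∀ z : ℂ, ‖z‖ = 1 →
      0 < ((∑ k ∈ Finset.range (2 * s - 1),
          ((2 * s - 1 - k : ℕ) : ℂ) * a k * z ^ k * ((starRingEnd ℂ) z) ^ (2 * s - 2 - k))
            * g z).im) :
    ∀ R : ℂ → ℂ, R =o[𝓝[≠] (0 : ℂ)] g →
      ∀ᶠ z in 𝓝[≠] (0 : ℂ),
        0 < (∑ k ∈ Finset.range (2 * s),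
            a k * z ^ k * ((starRingEnd ℂ) z + g z + R z) ^ (2 * s - 1 - k)).im ∧
        (∑ k ∈ Finset.range (2 * s),
            a k * z ^ k * ((starRingEnd ℂ) z - g z + R z) ^ (2 * s - 1 - k)).im < 0 := by
  intro R hR
  obtain ⟨U, hUo, hU0, hgU⟩ := hgC1
  set n := 2 * s - 1 with hndef
  have hn1 : 1 ≤ n := by omega
  have h2s : 2 * s = n + 1 := by omega
  have h2s2 : 2 * s - 2 = n - 1 := by omega
  rw [h2s2] at h_pos
  rw [h2s]
  -- the derivative polynomial
  set Q : ℂ → ℂ := fun w =>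
    ∑ k ∈ range n, ((n - k : ℕ) : ℂ) * a k * w ^ k * ((starRingEnd ℂ) w) ^ (n - 1 - k) with hQ
  have hQapp : ∀ w, Q w
      = ∑ k ∈ range n, ((n - k : ℕ) : ℂ) * a k * w ^ k * ((starRingEnd ℂ) w) ^ (n - 1 - k) :=
    fun w => rfl
  have hQc : Continuous Q := by
    apply continuous_finset_sum
    intro k _
    simp only [starRingEnd_apply]
    fun_prop
  -- continuity of g on the unit sphere
  obtain ⟨δ, hδ, hball⟩ := Metric.isOpen_iff.mp hUo 0 hU0
  set t₀ : ℝ := δ / 2 with ht₀def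
  have ht₀ : 0 < t₀ := by positivity
  have hmem : ∀ ω ∈ Metric.sphere (0 : ℂ) 1, (t₀ : ℂ) * ω ∈ U := by
    intro ω hω
    apply hball
    rw [mem_sphere_zero_iff_norm] at hω
    rw [Metric.mem_ball, dist_zero_right, norm_mul, Complex.norm_real, hω,
      Real.norm_eq_abs, abs_of_pos ht₀, mul_one]
    rw [ht₀def]; linarith
  have ht₀m : (0:ℝ) < t₀ ^ m := Real.rpow_pos_of_pos ht₀ m
  have hg_sph : ContinuousOn g (Metric.sphere (0 : ℂ) 1) := by
    have h1 : ContinuousOn (fun ω => (((t₀ ^ m : ℝ) : ℂ))⁻¹ * g ((t₀ : ℂ) * ω))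
        (Metric.sphere (0 : ℂ) 1) := by
      apply ContinuousOn.mul continuousOn_const
      apply (hgU.continuousOn).comp (by fun_prop) hmem
    apply h1.congr
    intro ω hω
    show g ω = ((t₀ ^ m : ℝ) : ℂ)⁻¹ * g ((t₀ : ℂ) * ω)
    rw [hg_hom t₀ ht₀ ω]
    have hne : ((t₀ ^ m : ℝ) : ℂ) ≠ 0 := by
      simp only [ne_eq, Complex.ofReal_eq_zero]; exact ne_of_gt ht₀m
    field_simp
  -- compactness: lower bound c on Im(Q·g) over the sphere
  have hφc : ContinuousOn (fun ω => (Q ω * g ω).im) (Metric.sphere (0 : ℂ) 1) :=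
    Complex.continuous_im.comp_continuousOn (hQc.continuousOn.mul hg_sph)
  obtain ⟨ω₀, hω₀, hmin'⟩ := (isCompact_sphere (0:ℂ) 1).exists_isMinOn
    ⟨1, by simp⟩ hφc
  obtain ⟨c, hc, hmin⟩ : ∃ c : ℝ, 0 < c ∧
      ∀ x ∈ Metric.sphere (0:ℂ) 1, c ≤ (Q x * g x).im := by
    refine ⟨(Q ω₀ * g ω₀).im, ?_, fun x hx => hmin' hx⟩
    apply h_pos
    exact mem_sphere_zero_iff_norm.mp hω₀
  -- bounds for g and Q on the sphere
  obtain ⟨x₁, hx₁, hmax₁'⟩ := (isCompact_sphere (0:ℂ) 1).exists_isMaxOn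
    ⟨1, by simp⟩ (hg_sph.norm)
  obtain ⟨M, hM1, hM⟩ : ∃ M : ℝ, 1 ≤ M ∧ ∀ x ∈ Metric.sphere (0:ℂ) 1, ‖g x‖ ≤ M :=
    ⟨max ‖g x₁‖ 1, le_max_right _ _, fun x hx => le_trans (hmax₁' hx) (le_max_left _ _)⟩
  have hM0 : (0:ℝ) < M := by linarith
  obtain ⟨x₂, hx₂, hmax₂'⟩ := (isCompact_sphere (0:ℂ) 1).exists_isMaxOn
    ⟨1, by simp⟩ (hQc.continuousOn.norm)
  obtain ⟨B, hB0, hB⟩ : ∃ B : ℝ, 0 ≤ B ∧ ∀ x ∈ Metric.sphere (0:ℂ) 1, ‖Q x‖ ≤ B :=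
    ⟨max ‖Q x₂‖ 0, le_max_right _ _, fun x hx => le_trans (hmax₂' hx) (le_max_left _ _)⟩
  obtain ⟨A, hA0, hAdef⟩ : ∃ A : ℝ, 0 ≤ A ∧
      A = (∑ k ∈ range (n+1), ‖a k‖) * 2 ^ n := by
    refine ⟨_, ?_, rfl⟩
    apply mul_nonneg _ (by positivity)
    exact Finset.sum_nonneg fun k _ => norm_nonneg _
  -- the small parameters
  obtain ⟨η, hη, hη1, hηc⟩ : ∃ η : ℝ, 0 < η ∧ η ≤ 1 ∧ B * M * η ≤ c / 4 := by
    refine ⟨min 1 (c / (4 * (B * M + 1))), lt_min one_pos ?_, min_le_left _ _, ?_⟩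
    · apply div_pos hc; nlinarith
    · have h1 : min 1 (c / (4 * (B * M + 1))) ≤ c / (4 * (B * M + 1)) := min_le_right _ _
      have h2 : (0:ℝ) < 4 * (B * M + 1) := by nlinarith
      rw [le_div_iff₀ h2] at h1
      nlinarith [mul_nonneg hB0 hM0.le]
  obtain ⟨σ, hσ, hσ1, hσ2⟩ : ∃ σ : ℝ, 0 < σ ∧ 2 * M * σ ≤ 1 ∧ 4 * A * M ^ 2 * σ ≤ c / 4 := by
    refine ⟨min (1 / (2 * M)) (c / (4 * (4 * A * M ^ 2 + 1))), lt_min ?_ ?_, ?_, ?_⟩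
    · apply div_pos one_pos; nlinarith
    · apply div_pos hc; nlinarith
    · have h1 : min (1 / (2 * M)) (c / (4 * (4 * A * M ^ 2 + 1))) ≤ 1 / (2 * M) :=
        min_le_left _ _
      have h2 : (0:ℝ) < 2 * M := by nlinarith
      rw [le_div_iff₀ h2] at h1
      nlinarith
    · have h1 : min (1 / (2 * M)) (c / (4 * (4 * A * M ^ 2 + 1)))
          ≤ c / (4 * (4 * A * M ^ 2 + 1)) := min_le_right _ _
      have h2 : (0:ℝ) < 4 * (4 * A * M ^ 2 + 1) := by nlinarith [sq_nonneg M]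
      rw [le_div_iff₀ h2] at h1
      nlinarith [mul_nonneg (mul_nonneg hA0 (sq_nonneg M)) hc.le]
  -- eventual conditions
  have hEv1 : ∀ᶠ z in 𝓝[≠] (0:ℂ), z ≠ 0 := by
    have := self_mem_nhdsWithin (s := {(0:ℂ)}ᶜ) (a := (0:ℂ))
    filter_upwards [this] with z hz
    simpa using hz
  have hEv2 : ∀ᶠ z in 𝓝[≠] (0:ℂ), ‖R z‖ ≤ η * ‖g z‖ := hR.def hη
  have hnorm : Tendsto (fun z : ℂ => ‖z‖) (𝓝[≠] (0:ℂ)) (𝓝 0) :=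
    ((continuous_norm.tendsto' (0:ℂ) 0 norm_zero)).mono_left nhdsWithin_le_nhds
  have hEv3 : ∀ᶠ z in 𝓝[≠] (0:ℂ), ‖z‖ < 1 := hnorm.eventually_lt_const one_pos
  have hpowt : Tendsto (fun z : ℂ => ‖z‖ ^ (m-1)) (𝓝[≠] (0:ℂ)) (𝓝 0) := by
    have hca : ContinuousAt (fun x : ℝ => x ^ (m-1)) 0 :=
      Real.continuousAt_rpow_const 0 (m-1) (Or.inr (by linarith))
    have := hca.tendsto.comp hnorm
    rwa [Real.zero_rpow (by intro h; linarith : m - 1 ≠ 0)] at this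
  have hEv4 : ∀ᶠ z in 𝓝[≠] (0:ℂ), ‖z‖ ^ (m-1) < σ := hpowt.eventually_lt_const hσ
  filter_upwards [hEv1, hEv2, hEv3, hEv4] with z hz hRz hz1 hzσ
  -- basic quantities
  set r : ℝ := ‖z‖ with hrdef
  have hr : 0 < r := norm_pos_iff.mpr hz
  set ω : ℂ := ((r:ℂ))⁻¹ * z with hωdef
  have hrne : ((r:ℂ)) ≠ 0 := by
    simp only [ne_eq, Complex.ofReal_eq_zero]; exact ne_of_gt hr
  have hωz : z = (r:ℂ) * ω := by
    rw [hωdef]; field_simp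
  have hωn : ‖ω‖ = 1 := by
    rw [hωdef, norm_mul, norm_inv, Complex.norm_real, Real.norm_eq_abs, abs_of_pos hr]
    exact inv_mul_cancel₀ (ne_of_gt hr)
  have hωs : ω ∈ Metric.sphere (0:ℂ) 1 := mem_sphere_zero_iff_norm.mpr hωn
  have hrm : (0:ℝ) < r ^ m := Real.rpow_pos_of_pos hr m
  have hrm1 : (0:ℝ) < r ^ (m - 1) := Real.rpow_pos_of_pos hr (m - 1)
  have hfact : r ^ (m - 1) * r = r ^ m := by
    calc r ^ (m - 1) * r = r ^ (m - 1) * r ^ (1:ℝ) := by rw [Real.rpow_one]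
      _ = r ^ (m - 1 + 1) := (Real.rpow_add hr _ _).symm
      _ = r ^ m := by norm_num
  -- scaling of g and Q
  have hgz : g z = ((r ^ m : ℝ) : ℂ) * g ω := by
    have h := hg_hom r hr ω
    rw [← hωz] at h
    exact h
  have hQz : Q z = ((r:ℂ)) ^ (n - 1) * Q ω := by
    have h : Q ((r:ℂ) * ω) = ((r:ℂ)) ^ (n - 1) * Q ω := by
      rw [hQapp, hQapp, Finset.mul_sum]
      apply Finset.sum_congr rfl
      intro k hk
      rw [Finset.mem_range] at hk
      rw [map_mul, Complex.conj_ofReal]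
      have hpow : ((r:ℂ)) ^ k * ((r:ℂ)) ^ (n - 1 - k) = ((r:ℂ)) ^ (n - 1) := by
        rw [← pow_add]; congr 1; omega
      calc ((n - k : ℕ) : ℂ) * a k * ((r:ℂ) * ω) ^ k
            * ((r:ℂ) * (starRingEnd ℂ) ω) ^ (n - 1 - k)
          = (((r:ℂ)) ^ k * ((r:ℂ)) ^ (n - 1 - k))
            * (((n - k : ℕ) : ℂ) * a k * ω ^ k * ((starRingEnd ℂ) ω) ^ (n - 1 - k)) := by
            rw [mul_pow, mul_pow]; ring
        _ = ((r:ℂ)) ^ (n - 1) * (((n - k : ℕ) : ℂ) * a k * ω ^ k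
            * ((starRingEnd ℂ) ω) ^ (n - 1 - k)) := by rw [hpow]
    rw [← hωz] at h
    exact h
  -- norm bounds
  have hgn : ‖g z‖ ≤ M * r ^ m := by
    rw [hgz, norm_mul, Complex.norm_real, Real.norm_eq_abs, abs_of_pos hrm]
    calc r ^ m * ‖g ω‖ ≤ r ^ m * M := by
          apply mul_le_mul_of_nonneg_left (hM ω hωs) hrm.le
      _ = M * r ^ m := by ring
  have hQn : ‖Q z‖ ≤ B * r ^ (n - 1) := by
    rw [hQz, norm_mul, norm_pow, Complex.norm_real, Real.norm_eq_abs, abs_of_pos hr]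
    calc r ^ (n - 1) * ‖Q ω‖ ≤ r ^ (n - 1) * B := by
          apply mul_le_mul_of_nonneg_left (hB ω hωs) (by positivity)
      _ = B * r ^ (n - 1) := by ring
  have hRn : ‖R z‖ ≤ η * (M * r ^ m) :=
    le_trans hRz (mul_le_mul_of_nonneg_left hgn hη.le)
  -- Im(Qz * gz) scaling and lower bound
  have hIm : (Q z * g z).im = r ^ (n - 1) * r ^ m * (Q ω * g ω).im := by
    have h : Q z * g z = ((r ^ (n - 1) * r ^ m : ℝ) : ℂ) * (Q ω * g ω) := by
      rw [hQz, hgz]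
      push_cast
      ring
    rw [h, Complex.im_ofReal_mul]
  set X : ℝ := r ^ (n - 1) * r ^ m with hXdef
  have hX : 0 < X := by positivity
  have hImlow : c * X ≤ (Q z * g z).im := by
    rw [hIm]
    calc c * X = X * c := by ring
      _ ≤ X * (Q ω * g ω).im := mul_le_mul_of_nonneg_left (hmin ω hωs) hX.le
      _ = r ^ (n - 1) * r ^ m * (Q ω * g ω).im := by rw [hXdef]
  -- bound on the cross term
  have hcross : |(Q z * R z).im| ≤ (c / 4) * X := by
    calc |(Q z * R z).im| ≤ ‖Q z * R z‖ := Complex.abs_im_le_norm _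
      _ = ‖Q z‖ * ‖R z‖ := norm_mul _ _
      _ ≤ (B * r ^ (n - 1)) * (η * (M * r ^ m)) := by
          apply mul_le_mul hQn hRn (norm_nonneg _) (by positivity)
      _ = (B * M * η) * X := by rw [hXdef]; ring
      _ ≤ (c / 4) * X := mul_le_mul_of_nonneg_right hηc hX.le
  -- remainder bound
  have hconj : ‖(starRingEnd ℂ) z‖ = r := by
    have h : ‖(starRingEnd ℂ) z‖ = ‖z‖ := by simp
    exact h.trans hrdef.symm
  have hεsmall : 2 * M * r ^ m ≤ r := by
    have h2 : 2 * M * r ^ (m - 1) ≤ 1 := by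
      nlinarith [mul_le_mul_of_nonneg_left hzσ.le (by linarith : (0:ℝ) ≤ 2 * M)]
    nlinarith [hfact, hr.le, hrm1.le]
  have hRem : ∀ ε : ℂ, ‖ε‖ ≤ 2 * M * r ^ m →
      |(∑ k ∈ range (n + 1), a k * z ^ k *
        (((starRingEnd ℂ) z + ε) ^ (n - k) - ((starRingEnd ℂ) z) ^ (n - k)
          - ((n - k : ℕ) : ℂ) * ((starRingEnd ℂ) z) ^ (n - k - 1) * ε)).im| ≤ (c / 4) * X := by
    intro ε hε
    have hεr : ‖ε‖ ≤ ‖(starRingEnd ℂ) z‖ := by rw [hconj]; exact hε.trans hεsmall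
    have hterm : ∀ k ∈ range (n + 1),
        ‖a k * z ^ k * (((starRingEnd ℂ) z + ε) ^ (n - k) - ((starRingEnd ℂ) z) ^ (n - k)
          - ((n - k : ℕ) : ℂ) * ((starRingEnd ℂ) z) ^ (n - k - 1) * ε)‖
        ≤ ‖a k‖ * (2 ^ n * ((2 * M * r ^ m) ^ 2 * r ^ (n - 2))) := by
      intro k hk
      rw [Finset.mem_range] at hk
      have htay := taylor_rem_bound (n - k) ((starRingEnd ℂ) z) ε hεr
      rw [hconj] at htay
      have e1 : r ^ k * r ^ (n - k - 2) ≤ r ^ (n - 2) := by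
        rw [← pow_add]
        exact pow_le_pow_of_le_one hr.le hz1.le (by omega)
      have e2 : (2:ℝ) ^ (n - k) ≤ 2 ^ n := by
        apply pow_le_pow_right₀ one_le_two (by omega)
      have e3 : ‖ε‖ ^ 2 ≤ (2 * M * r ^ m) ^ 2 := by
        apply pow_le_pow_left₀ (norm_nonneg _) hε
      calc ‖a k * z ^ k * (((starRingEnd ℂ) z + ε) ^ (n - k) - ((starRingEnd ℂ) z) ^ (n - k)
              - ((n - k : ℕ) : ℂ) * ((starRingEnd ℂ) z) ^ (n - k - 1) * ε)‖
          = ‖a k‖ * r ^ k * ‖((starRingEnd ℂ) z + ε) ^ (n - k) - ((starRingEnd ℂ) z) ^ (n - k)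
              - ((n - k : ℕ) : ℂ) * ((starRingEnd ℂ) z) ^ (n - k - 1) * ε‖ := by
            rw [norm_mul, norm_mul, norm_pow, ← hrdef]
        _ ≤ ‖a k‖ * r ^ k * (2 ^ (n - k) * ‖ε‖ ^ 2 * r ^ (n - k - 2)) := by
            apply mul_le_mul_of_nonneg_left htay (by positivity)
        _ = ‖a k‖ * (2 ^ (n - k) * ‖ε‖ ^ 2 * (r ^ k * r ^ (n - k - 2))) := by ring
        _ ≤ ‖a k‖ * (2 ^ n * ((2 * M * r ^ m) ^ 2 * r ^ (n - 2))) := by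
            apply mul_le_mul_of_nonneg_left _ (norm_nonneg _)
            calc (2:ℝ) ^ (n - k) * ‖ε‖ ^ 2 * (r ^ k * r ^ (n - k - 2))
                ≤ 2 ^ n * (2 * M * r ^ m) ^ 2 * r ^ (n - 2) := by
                  apply mul_le_mul (mul_le_mul e2 e3 (by positivity) (by positivity)) e1
                    (by positivity) (by positivity)
              _ = 2 ^ n * ((2 * M * r ^ m) ^ 2 * r ^ (n - 2)) := by ring
    have e4 : r * r ^ (n - 2) ≤ r ^ (n - 1) := by
      rcases Nat.lt_or_ge n 2 with h|h
      · have hn' : n = 1 := by omega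
        rw [hn']
        norm_num
        exact hz1.le
      · have heq : r ^ (n - 1) = r * r ^ (n - 2) := by
          rw [← pow_succ']
          congr 1
          omega
        exact le_of_eq heq.symm
    calc |(∑ k ∈ range (n + 1), a k * z ^ k *
          (((starRingEnd ℂ) z + ε) ^ (n - k) - ((starRingEnd ℂ) z) ^ (n - k)
            - ((n - k : ℕ) : ℂ) * ((starRingEnd ℂ) z) ^ (n - k - 1) * ε)).im|
        ≤ ‖∑ k ∈ range (n + 1), a k * z ^ k *
          (((starRingEnd ℂ) z + ε) ^ (n - k) - ((starRingEnd ℂ) z) ^ (n - k)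
            - ((n - k : ℕ) : ℂ) * ((starRingEnd ℂ) z) ^ (n - k - 1) * ε)‖ :=
          Complex.abs_im_le_norm _
      _ ≤ ∑ k ∈ range (n + 1), ‖a k * z ^ k *
          (((starRingEnd ℂ) z + ε) ^ (n - k) - ((starRingEnd ℂ) z) ^ (n - k)
            - ((n - k : ℕ) : ℂ) * ((starRingEnd ℂ) z) ^ (n - k - 1) * ε)‖ := norm_sum_le _ _
      _ ≤ ∑ k ∈ range (n + 1), ‖a k‖ * (2 ^ n * ((2 * M * r ^ m) ^ 2 * r ^ (n - 2))) :=
          Finset.sum_le_sum hterm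
      _ = A * ((2 * M * r ^ m) ^ 2 * r ^ (n - 2)) := by
          rw [← Finset.sum_mul, hAdef]; ring
      _ = (4 * A * M ^ 2) * (r ^ m * (r ^ (m - 1) * (r * r ^ (n - 2)))) := by
          rw [← hfact]; ring
      _ ≤ (4 * A * M ^ 2) * (r ^ m * (r ^ (m - 1) * r ^ (n - 1))) := by
          apply mul_le_mul_of_nonneg_left _ (by positivity)
          apply mul_le_mul_of_nonneg_left _ hrm.le
          exact mul_le_mul_of_nonneg_left e4 hrm1.le
      _ = ((4 * A * M ^ 2) * r ^ (m - 1)) * X := by rw [hXdef]; ring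
      _ ≤ (c / 4) * X := by
          apply mul_le_mul_of_nonneg_right _ hX.le
          have h6 : (0:ℝ) ≤ 4 * A * M ^ 2 := by positivity
          nlinarith [mul_le_mul_of_nonneg_left hzσ.le h6]
  -- assemble
  have hQmid : (∑ k ∈ range n, ((n - k : ℕ) : ℂ) * a k * z ^ k
      * ((starRingEnd ℂ) z) ^ (n - 1 - k)) = Q z := (hQapp z).symm
  have hS0 := real_part_lemma n a h_sym z
  constructor
  · have hassoc : (starRingEnd ℂ) z + g z + R z = (starRingEnd ℂ) z + (g z + R z) := by ring
    rw [hassoc, expand_lemma n hn1 a z (g z + R z), Complex.add_im, Complex.add_im, hS0, hQmid]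
    have hε : ‖g z + R z‖ ≤ 2 * M * r ^ m := by
      calc ‖g z + R z‖ ≤ ‖g z‖ + ‖R z‖ := norm_add_le _ _
        _ ≤ M * r ^ m + η * (M * r ^ m) := add_le_add hgn hRn
        _ ≤ 2 * M * r ^ m := by
            nlinarith [mul_le_mul_of_nonneg_right hη1 (by positivity : (0:ℝ) ≤ M * r ^ m)]
    have hrem := hRem (g z + R z) hε
    have hsplit : (Q z * (g z + R z)).im = (Q z * g z).im + (Q z * R z).im := by
      rw [mul_add, Complex.add_im]
    rw [hsplit]
    have h2 := abs_le.mp hcross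
    have h3 := abs_le.mp hrem
    linarith [hImlow, h2.1, h2.2, h3.1, h3.2, mul_pos hc hX]
  · have hassoc : (starRingEnd ℂ) z - g z + R z = (starRingEnd ℂ) z + (-g z + R z) := by ring
    rw [hassoc, expand_lemma n hn1 a z (-g z + R z), Complex.add_im, Complex.add_im, hS0, hQmid]
    have hε : ‖-g z + R z‖ ≤ 2 * M * r ^ m := by
      calc ‖-g z + R z‖ ≤ ‖-g z‖ + ‖R z‖ := norm_add_le _ _
        _ = ‖g z‖ + ‖R z‖ := by rw [norm_neg]
        _ ≤ M * r ^ m + η * (M * r ^ m) := add_le_add hgn hRn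
        _ ≤ 2 * M * r ^ m := by
            nlinarith [mul_le_mul_of_nonneg_right hη1 (by positivity : (0:ℝ) ≤ M * r ^ m)]
    have hrem := hRem (-g z + R z) hε
    have hsplit : (Q z * (-g z + R z)).im = -(Q z * g z).im + (Q z * R z).im := by
      have : Q z * (-g z + R z) = -(Q z * g z) + Q z * R z := by ring
      rw [this, Complex.add_im, Complex.neg_im]
    rw [hsplit]
    have h2 := abs_le.mp hcross
    have h3 := abs_le.mp hrem
    linarith [hImlow, h2.1, h2.2, h3.1, h3.2, mul_pos hc hX]
end
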